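/- Let F be a finite field with q = |F| elements and K a finite field extension of F of degree m. Let n, t, r be natural numbers with t ≤ n and r ≤ min(m, n − t). For v ∈ K^n, write v₂ ∈ K^{n−t} for the vector of its last n − t coordinates, and let w(v) denote the F-dimension of the F-span of the coordinates of v. Then |{v ∈ K^n : w(v) = r and w(v₂) = r}| · ∏_{i=0}^{r−1} (q^n − q^i) = q^{r·t} · (∏_{i=0}^{r−1} (q^{n−t} − q^i)) · |{v ∈ K^n : w(v) = r}|. (Equivalently, for a uniformly random v ∈ K^n, the conditional probability that w(v₂) = r given w(v) = r equals q^{r·t} ∏_{i=0}^{r−1} (q^{n−t} − q^i)/(q^n − q^i).) -/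

import Mathlib

open Finset Submodule Matrix

attribute [local instance] Fintype.ofFinite

section Aux

variable {F : Type*} [Field F] [Fintype F]

/-- Spanning condition transfers along a linear equivalence. -/
lemma span_top_equiv {M N : Type*} [AddCommGroup M] [Module F M]
    [AddCommGroup N] [Module F N] (e : M ≃ₗ[F] N) {d : ℕ} (v : Fin d → M) :
    Submodule.span F (Set.range (fun i => e (v i))) = ⊤ ↔
      Submodule.span F (Set.range v) = ⊤ := by
  have h : Set.range (fun i => e (v i)) = e.toLinearMap '' Set.range v := by
    rw [← Set.range_comp]; rfl
  rw [h, ← Submodule.map_span,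
    LinearMap.map_eq_top_iff (f := (e : M →ₗ[F] N)) (LinearMap.range_eq_top.2 e.surjective)]
  simp

lemma matrix_span_cols_top_iff {r d : ℕ} (hrd : r ≤ d) (A : Matrix (Fin r) (Fin d) F) :
    Submodule.span F (Set.range Aᵀ) = ⊤ ↔ LinearIndependent F A := by
  rw [linearIndependent_iff_card_eq_finrank_span (M := Fin d → F) (b := A)]
  have h1 : A.rank = Module.finrank F (Submodule.span F (Set.range Aᵀ)) :=
    Matrix.rank_eq_finrank_span_cols A
  have h2 : A.rank = Module.finrank F (Submodule.span F (Set.range A)) :=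
    Matrix.rank_eq_finrank_span_row A
  have htop : Module.finrank F (⊤ : Submodule F (Fin d → F)) = d := by
    simp [finrank_top]
  constructor
  · intro h
    rw [Set.finrank, ← h2, h1, h]
    simp [htop]
  · intro h
    simp only [Set.finrank, Fintype.card_fin] at h
    apply Submodule.eq_top_of_finrank_eq
    rw [← h1, h2, ← h]
    simp

/-- The number of spanning `d`-tuples of an `r`-dimensional space. -/
lemma card_span_eq_top (M : Type*) [AddCommGroup M] [Module F M] [Finite M]
    {d : ℕ} (hd : Module.finrank F M ≤ d) :
    Nat.card {v : Fin d → M // Submodule.span F (Set.range v) = ⊤} =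
      ∏ i ∈ Finset.range (Module.finrank F M),
        (Fintype.card F ^ d - Fintype.card F ^ i) := by
  have : Module.Finite F M := Module.Finite.of_finite
  set r := Module.finrank F M with hrdef
  let e : M ≃ₗ[F] (Fin r → F) := (Module.finBasis F M).equivFun
  let e1 : {v : Fin d → M // Submodule.span F (Set.range v) = ⊤} ≃
      {v : Fin d → (Fin r → F) // Submodule.span F (Set.range v) = ⊤} :=
    { toFun := fun v => ⟨fun i => e (v.1 i), (span_top_equiv e v.1).2 v.2⟩
      invFun := fun v => ⟨fun i => e.symm (v.1 i), by
        have := (span_top_equiv e.symm v.1).2 v.2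
        exact this⟩
      left_inv := fun v => by ext i; simp
      right_inv := fun v => by ext i; simp }
  let e2 : {v : Fin d → (Fin r → F) // Submodule.span F (Set.range v) = ⊤} ≃
      {w : Fin r → (Fin d → F) // LinearIndependent F w} :=
    { toFun := fun v => ⟨fun i j => v.1 j i, by
        exact (matrix_span_cols_top_iff hd (Matrix.of fun i j => v.1 j i)).1 v.2⟩
      invFun := fun w => ⟨fun j i => w.1 i j, by
        exact (matrix_span_cols_top_iff hd (Matrix.of fun i j => w.1 i j)).2 w.2⟩
      left_inv := fun v => rfl
      right_inv := fun w => rfl }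
  rw [Nat.card_congr (e1.trans e2), card_linearIndependent]
  · rw [Module.finrank_fintype_fun_eq_card, Fintype.card_fin,
      Finset.prod_range fun i => (Fintype.card F ^ d - Fintype.card F ^ i)]
  · rw [Module.finrank_fintype_fun_eq_card, Fintype.card_fin]; exact hd

end Aux

section Aux2

variable {F : Type*} [Field F] [Fintype F]

omit [Fintype F] in
lemma span_val_eq_iff {V : Type*} [AddCommGroup V] [Module F V] (U : Submodule F V)
    {d : ℕ} (v : Fin d → U) :
    Submodule.span F (Set.range (fun i => (v i : V))) = U ↔
      Submodule.span F (Set.range v) = ⊤ := by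
  have h : Set.range (fun i => (v i : V)) = U.subtype '' Set.range v := by
    rw [← Set.range_comp]; rfl
  rw [h, ← Submodule.map_span]
  constructor
  · intro hh
    apply Submodule.map_injective_of_injective U.injective_subtype
    rw [hh, Submodule.map_top, Submodule.range_subtype]
  · intro hh
    rw [hh, Submodule.map_top, Submodule.range_subtype]

omit [Fintype F] in
lemma fixedSpanEquiv {V : Type*} [AddCommGroup V] [Module F V] (U : Submodule F V)
    (d : ℕ) :
    Nonempty ({v : Fin d → V // Submodule.span F (Set.range v) = U} ≃
      {v : Fin d → U // Submodule.span F (Set.range v) = ⊤}) := by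
  refine ⟨{
    toFun := fun v => ⟨fun i => ⟨v.1 i, by
        have := Submodule.subset_span (R := F) (Set.mem_range_self (f := v.1) i)
        rwa [v.2] at this⟩,
      (span_val_eq_iff U _).1 v.2⟩
    invFun := fun w => ⟨fun i => (w.1 i : V), (span_val_eq_iff U w.1).2 w.2⟩
    left_inv := fun v => rfl
    right_inv := fun w => by ext i; rfl }⟩

/-- Number of `d`-tuples in `V` spanning a fixed `r`-dimensional subspace `U`. -/
lemma card_span_eq_submodule {V : Type*} [AddCommGroup V] [Module F V] [Finite V]
    (U : Submodule F V) {r d : ℕ} (hU : Module.finrank F U = r) (hd : r ≤ d) :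
    Nat.card {v : Fin d → V // Submodule.span F (Set.range v) = U} =
      ∏ i ∈ Finset.range r, (Fintype.card F ^ d - Fintype.card F ^ i) := by
  rw [Nat.card_congr (fixedSpanEquiv U d).some, card_span_eq_top _ (by rw [hU]; exact hd), hU]

lemma nat_card_sigma {ι : Type*} [Fintype ι] (f : ι → Type*) [∀ i, Finite (f i)] :
    Nat.card (Σ i, f i) = ∑ i : ι, Nat.card (f i) := by
  classical
  have : ∀ i, Fintype (f i) := fun i => Fintype.ofFinite _
  simp [Nat.card_eq_fintype_card, Fintype.card_sigma]

end Aux2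

section Splice

variable {K : Type*}

/-- Splice a head of length `t` and a tail of length `n - t` into a vector of length `n`. -/
def splice (n t : ℕ) (h1 : Fin t → K) (w : Fin (n - t) → K) : Fin n → K :=
  fun i => if h : (i : ℕ) < t then h1 ⟨(i : ℕ), h⟩
    else w ⟨(i : ℕ) - t, by have := i.isLt; omega⟩

lemma splice_tail (n t : ℕ) (h1 : Fin t → K) (w : Fin (n - t) → K)
    (j : Fin (n - t)) (hj : t + (j : ℕ) < n) :
    splice n t h1 w ⟨t + (j : ℕ), hj⟩ = w j := by
  have hvc : ((⟨t + (j : ℕ), hj⟩ : Fin n) : ℕ) = t + (j : ℕ) := rfl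
  simp only [splice]
  rw [dif_neg (by omega)]
  congr 1
  ext
  exact (show t + (j : ℕ) - t = (j : ℕ) by omega)

lemma splice_head (n t : ℕ) (h1 : Fin t → K) (w : Fin (n - t) → K)
    (i : Fin t) (hi : (i : ℕ) < n) :
    splice n t h1 w ⟨(i : ℕ), hi⟩ = h1 i := by
  rw [splice, dif_pos i.isLt]

lemma splice_eta (n t : ℕ) (ht : t ≤ n) (v : Fin n → K) (i : Fin n) :
    splice n t (fun i : Fin t => v ⟨(i : ℕ), by have := i.isLt; omega⟩)
      (fun j : Fin (n - t) => v ⟨t + (j : ℕ), by have := j.isLt; omega⟩) i = v i := by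
  by_cases h : (i : ℕ) < t
  · simp only [splice]
    rw [dif_pos h]
  · simp only [splice]
    rw [dif_neg h]
    exact congrArg v (Fin.ext (show t + ((i : ℕ) - t) = (i : ℕ) by omega))

end Splice

/-- For a uniformly random vector `v ∈ K^n`, the conditional probability that
its last `n - t` coordinates have full rank weight `r` given `w(v) = r` equals
`q^{rt} ∏_{i<r} (q^{n-t} - q^i)/(q^n - q^i)`, stated multiplicatively:
`|{v : w(v) = r ∧ w(v₂) = r}| · ∏_{i<r}(q^n - q^i)
  = q^{rt} · (∏_{i<r}(q^{n-t} - q^i)) · |{v : w(v) = r}|`. -/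
theorem prob_full_support_on_tail (F K : Type*) [Field F] [Fintype F]
    [Field K] [Fintype K] [Algebra F K]
    (q m n t r : ℕ) (hq : q = Fintype.card F) (hm : m = Module.finrank F K)
    (ht : t ≤ n) (hr : r ≤ min m (n - t)) :
    Nat.card {v : Fin n → K //
        Module.finrank F (Submodule.span F (Set.range v)) = r ∧
        Module.finrank F (Submodule.span F (Set.range
          (fun j : Fin (n - t) =>
            v ⟨t + (j : ℕ), by have := j.isLt; omega⟩))) = r} *
      ∏ i ∈ Finset.range r, (q ^ n - q ^ i) =
    q ^ (r * t) * (∏ i ∈ Finset.range r, (q ^ (n - t) - q ^ i)) *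
      Nat.card {v : Fin n → K //
        Module.finrank F (Submodule.span F (Set.range v)) = r} := by
  classical
  subst hq hm
  set q := Fintype.card F with hq
  have hK : Module.Finite F K := Module.Finite.of_finite
  have hr2 : r ≤ n - t := le_trans hr (min_le_right _ _)
  have hrn : r ≤ n := le_trans hr2 (Nat.sub_le n t)
  set P := {U : Submodule F K // Module.finrank F ↥U = r} with hP
  -- the tail map
  set tl : (Fin n → K) → (Fin (n - t) → K) :=
    fun v => (fun j : Fin (n - t) => v ⟨t + (j : ℕ), by have := j.isLt; omega⟩) with htl
  -- counting the set {w(v) = r}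
  have hB : Nat.card {v : Fin n → K //
        Module.finrank F (Submodule.span F (Set.range v)) = r} =
      Nat.card P * ∏ i ∈ Finset.range r, (q ^ n - q ^ i) := by
    set B := {v : Fin n → K //
        Module.finrank F (Submodule.span F (Set.range v)) = r} with hBdef
    let gB : B → P := fun v => ⟨Submodule.span F (Set.range v.1), v.2⟩
    have eB : Nat.card B = ∑ U : P,
        Nat.card {v : Fin n → K // Submodule.span F (Set.range v) = U.1} := by
      rw [← Nat.card_congr (Equiv.sigmaFiberEquiv gB), nat_card_sigma]
      refine Finset.sum_congr rfl fun U _ => Nat.card_congr {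
        toFun := fun a => ⟨a.1.1, congrArg Subtype.val a.2⟩
        invFun := fun v => ⟨⟨v.1, by rw [v.2]; exact U.2⟩, Subtype.ext v.2⟩
        left_inv := fun a => Subtype.ext (Subtype.ext rfl)
        right_inv := fun v => rfl }
    rw [eB,
      Finset.sum_congr rfl (fun U _ => card_span_eq_submodule U.1 U.2 hrn),
      Finset.sum_const, smul_eq_mul, Finset.card_univ, Nat.card_eq_fintype_card]
  -- counting the set {w(v) = r ∧ w(v₂) = r}
  have hA : Nat.card {v : Fin n → K //
        Module.finrank F (Submodule.span F (Set.range v)) = r ∧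
        Module.finrank F (Submodule.span F (Set.range
          (fun j : Fin (n - t) =>
            v ⟨t + (j : ℕ), by have := j.isLt; omega⟩))) = r} =
      Nat.card P * (q ^ (r * t) * ∏ i ∈ Finset.range r, (q ^ (n - t) - q ^ i)) := by
    set A := {v : Fin n → K //
        Module.finrank F (Submodule.span F (Set.range v)) = r ∧
        Module.finrank F (Submodule.span F (Set.range
          (fun j : Fin (n - t) =>
            v ⟨t + (j : ℕ), by have := j.isLt; omega⟩))) = r} with hAdef
    -- for each a ∈ A, the span of the whole vector equals the span of the tail
    have key : ∀ a : A, Submodule.span F (Set.range (tl a.1)) =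
        Submodule.span F (Set.range a.1) := by
      intro a
      refine Submodule.eq_of_le_of_finrank_eq (Submodule.span_mono ?_) ?_
      · rintro _ ⟨j, rfl⟩; exact ⟨_, rfl⟩
      · rw [a.2.2, a.2.1]
    let g : A → P := fun a => ⟨Submodule.span F (Set.range (tl a.1)), a.2.2⟩
    have efib : ∀ U : P, Nonempty ({a : A // g a = U} ≃
        ((Fin t → U.1) ×
          {w : Fin (n - t) → K // Submodule.span F (Set.range w) = U.1})) := by
      intro U
      refine ⟨{
        toFun := fun a => ⟨fun i => ⟨a.1.1 ⟨(i : ℕ), lt_of_lt_of_le i.isLt ht⟩, by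
            have h1 : a.1.1 ⟨(i : ℕ), lt_of_lt_of_le i.isLt ht⟩ ∈
                Submodule.span F (Set.range a.1.1) :=
              Submodule.subset_span (Set.mem_range_self _)
            rw [← key a.1] at h1
            have h2 : Submodule.span F (Set.range (tl a.1.1)) = U.1 :=
              congrArg Subtype.val a.2
            rwa [h2] at h1⟩,
          ⟨tl a.1.1, congrArg Subtype.val a.2⟩⟩
        invFun := fun x => by
          set v' : Fin n → K := splice n t (fun i => (x.1 i : K)) x.2.1 with hv'
          have htail : tl v' = x.2.1 := by
            funext j
            exact splice_tail n t _ _ j _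
          have hspan : Submodule.span F (Set.range v') = U.1 := by
            apply le_antisymm
            · rw [Submodule.span_le]
              rintro _ ⟨i, rfl⟩
              simp only [hv', splice]
              split
              · exact (x.1 _).2
              · rename_i hcond
                have h2 : x.2.1 ⟨(i : ℕ) - t, by have := i.isLt; omega⟩ ∈
                    Submodule.span F (Set.range x.2.1) :=
                  Submodule.subset_span (Set.mem_range_self _)
                rw [x.2.2] at h2
                exact h2
            · conv_lhs => rw [← x.2.2, ← htail]
              exact Submodule.span_mono (by rintro _ ⟨j, rfl⟩; exact ⟨_, rfl⟩)
          refine ⟨⟨v', ?_, ?_⟩, ?_⟩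
          · rw [hspan]; exact U.2
          · show Module.finrank F (Submodule.span F (Set.range (tl v'))) = r
            rw [htail, x.2.2]; exact U.2
          · refine Subtype.ext ?_
            show Submodule.span F (Set.range (tl v')) = U.1
            rw [htail, x.2.2]
        left_inv := fun a => by
          refine Subtype.ext (Subtype.ext (funext fun i => ?_))
          exact splice_eta n t ht a.1.1 i
        right_inv := fun x => by
          refine Prod.ext (funext fun i => Subtype.ext ?_) (Subtype.ext (funext fun j => ?_))
          · exact splice_head n t (fun i => (x.1 i : K)) x.2.1 i
              (lt_of_lt_of_le i.isLt ht)
          · exact splice_tail n t (fun i => (x.1 i : K)) x.2.1 j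
              (by have := j.isLt; omega) }⟩
    have hsum : Nat.card A = ∑ U : P, Nat.card ((Fin t → U.1) ×
        {w : Fin (n - t) → K // Submodule.span F (Set.range w) = U.1}) := by
      rw [← Nat.card_congr (Equiv.sigmaFiberEquiv g), nat_card_sigma]
      exact Finset.sum_congr rfl (fun U _ => Nat.card_congr (efib U).some)
    rw [hsum]
    have hcard : ∀ U : P, Nat.card ((Fin t → U.1) ×
        {w : Fin (n - t) → K // Submodule.span F (Set.range w) = U.1}) =
        q ^ (r * t) * ∏ i ∈ Finset.range r, (q ^ (n - t) - q ^ i) := by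
      intro U
      rw [Nat.card_prod, card_span_eq_submodule U.1 U.2 hr2, Nat.card_pi]
      have hU : Nat.card U.1 = q ^ r := by
        rw [Nat.card_eq_fintype_card, Module.card_eq_pow_finrank (K := F) (V := U.1), U.2]
      rw [Finset.prod_const, Finset.card_univ, Fintype.card_fin, hU, ← pow_mul]
    rw [Finset.sum_congr rfl (fun U _ => hcard U), Finset.sum_const, smul_eq_mul,
      Finset.card_univ, Nat.card_eq_fintype_card]
  rw [hA, hB]
  ring
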